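/- arXiv:1610.02397 — 2 statements merged into one kernel-verified Lean document; each statement's English description precedes it below -/
import Mathlib

section
/- Let A be a commutative ring, d a natural number, s_0,…,s_d, a_0,…,a_d ∈ A with ∑ a_i s_i = 1, and f := ∑ a_i x_i ∈ A[x_0,…,x_d]. Let R be the degree-zero part of the localization of A[x_0,…,x_d] away from f, set ξ_i := class of x_i/f in R and y_i := ξ_i − s_i, and let J ⊆ R be the ideal generated by the elements s_j ξ_i − s_i ξ_j for all i, j. Consider the A-algebra homomorphism Φ : A[t_0,…,t_d] → R/J² sending t_i to the class of y_i. Then Φ is surjective, and its kernel is the ideal of A[t_0,…,t_d] generated by the products t_i t_j (for all 0 ≤ i, j ≤ d) together with the linear form ∑_{i=0}^{d} a_i t_i. -/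
/-!
Let `ε : A[x] → R` send `xᵢ ↦ ξᵢ`. Every element of `R` is `p / fⁿ` with `p` homogeneous of
degree `n`, and `p / fⁿ = ε p` because `p` is homogeneous; so `ε` is surjective, and so is `Φ`
since `ξᵢ = yᵢ + sᵢ`. For the kernel, `xᵢ ↦ tᵢ + sᵢ` sends `f` to `1 + ∑ aᵢ tᵢ`, a unit modulo
`K := (tᵢ tⱼ, ∑ aᵢ tᵢ)`, hence extends to `ψ : R → A[t]/K`. It maps `J` into `(t₀, …, t_d)`,
whose square vanishes modulo `K`, so `ψ` factors through `R/J²` and `ψ ∘ Φ` is the projection;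
thus `ker Φ ⊆ K`. Conversely `yᵢ = ∑ⱼ aⱼ (sⱼ ξᵢ - sᵢ ξⱼ) ∈ J` and `∑ aᵢ yᵢ = 0`.
-/

open MvPolynomial HomogeneousLocalization

attribute [local instance] MvPolynomial.gradedAlgebra

noncomputable section

variable {A : Type*} [CommRing A] {d : ℕ}

/-- A linear form `∑ cᵢ xᵢ` is homogeneous of degree `1`. -/
lemma linear_mem_one (c : Fin (d + 1) → A) :
    (∑ i, C (c i) * X i : MvPolynomial (Fin (d + 1)) A) ∈
      homogeneousSubmodule (Fin (d + 1)) A 1 := by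
  rw [mem_homogeneousSubmodule]
  apply MvPolynomial.IsHomogeneous.sum
  intro i _
  simpa using (isHomogeneous_C _ (c i)).mul (isHomogeneous_X _ i)

variable (a : Fin (d + 1) → A)

/-- `Rloc a` is the degree-zero part of the localization of `A[x_0, …, x_d]`
away from the degree-one element `f = ∑ aᵢ xᵢ` (the homogeneous localization at `f`),
where `A[x_0, …, x_d]` is graded by total degree. -/
abbrev Rloc : Type _ := HomogeneousLocalization.Away (homogeneousSubmodule (Fin (d + 1)) A)
    (∑ i, C (a i) * X i)

/-- `ξ a i` is the class of `xᵢ / f` in the homogeneous localization `Rloc a`. -/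
def ξ (i : Fin (d + 1)) : Rloc a :=
  HomogeneousLocalization.mk ⟨1, ⟨X i, (mem_homogeneousSubmodule _ _).2 (isHomogeneous_X _ i)⟩,
    ⟨∑ j, C (a j) * X j, linear_mem_one a⟩, Submonoid.mem_powers _⟩

/-- `Rloc a` is an `A`-algebra, via `c ↦ (c·f)/f`, i.e. the composite of the structure map
`A → A[x_0, …, x_d]`, the projection to the degree-zero component, and the map from the
degree-zero component into the homogeneous localization. -/
instance : Algebra A (Rloc a) :=
  ((fromZeroRingHom _ _).comp ((GradedRing.projZeroRingHom' _).comp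
    (algebraMap A (MvPolynomial (Fin (d + 1)) A)))).toAlgebra

variable (s : Fin (d + 1) → A)

/-- `Jid s a` is the localized ideal of the section: the ideal of `Rloc a` generated by the
elements `sⱼ ξᵢ - sᵢ ξⱼ` for all `0 ≤ i, j ≤ d`. -/
def Jid : Ideal (Rloc a) :=
  Ideal.span (Set.range fun p : Fin (d + 1) × Fin (d + 1) =>
    s p.2 • ξ a p.1 - s p.1 • ξ a p.2)

theorem MvPolynomial.IsHomogeneous.aeval_smul {R S σ : Type*} [CommSemiring R] [CommSemiring S]
    [Algebra R S] {φ : MvPolynomial σ R} {n : ℕ} (hφ : φ.IsHomogeneous n) (u : S)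
    (v : σ → S) :
    MvPolynomial.aeval (u • v) φ = u ^ n * MvPolynomial.aeval v φ := by
  simp only [aeval_def, eval₂_eq, Finset.mul_sum]
  refine Finset.sum_congr rfl fun m hm => ?_
  have hdeg : ∑ i ∈ m.support, m i = n := by
    simpa [Finsupp.degree_eq_weight_one, Finsupp.weight_apply, Finsupp.sum] using
      hφ (mem_support_iff.1 hm)
  simp only [Pi.smul_apply, smul_eq_mul, mul_pow, Finset.prod_mul_distrib,
    Finset.prod_pow_eq_pow_sum, hdeg]
  ring

lemma val_algebraMap (c : A) :
    (algebraMap A (Rloc a) c).val = algebraMap A (Localization.Away (∑ i, C (a i) * X i)) c := by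
  have hC : C c ∈ homogeneousSubmodule (Fin (d + 1)) A 0 :=
    (mem_homogeneousSubmodule _ _).2 (isHomogeneous_C _ c)
  have h0 :
      GradedRing.projZeroRingHom' (homogeneousSubmodule (Fin (d + 1)) A) (C c) = ⟨C c, hC⟩ :=
    GradedRing.projZeroRingHom'_apply_coe _ ⟨C c, hC⟩
  change (fromZeroRingHom _ _ (GradedRing.projZeroRingHom' _ (C c))).val = _
  rw [h0, IsScalarTower.algebraMap_apply A (MvPolynomial (Fin (d + 1)) A),
    ← Localization.mk_one_eq_algebraMap]
  rfl

/-- `c • r` in the statement is the scalar action of `HomogeneousLocalization`, not that of the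
`Algebra A (Rloc a)` instance; the two agree. -/
lemma smul_eq_algebraMap_mul (c : A) (r : Rloc a) : c • r = algebraMap A (Rloc a) c * r := by
  apply val_injective
  rw [val_smul, val_mul, val_algebraMap, Algebra.smul_def]

def valₐ :
    Rloc a →ₐ[A] Localization.Away (∑ i, C (a i) * X i : MvPolynomial (Fin (d + 1)) A) :=
  { algebraMap (Rloc a) _ with commutes' := val_algebraMap a }

lemma val_ξ : (fun i => (ξ a i).val) =
    Localization.mk 1 ⟨∑ j, C (a j) * X j, Submonoid.mem_powers _⟩ •
      (algebraMap (MvPolynomial (Fin (d + 1)) A) (Localization.Away (∑ i, C (a i) * X i)) ∘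
        X) := by
  ext i
  rw [ξ, val_mk, Pi.smul_apply, Function.comp_apply, smul_eq_mul,
    ← Localization.mk_one_eq_algebraMap, Localization.mk_mul, one_mul, mul_one]

lemma val_aeval_ξ {n : ℕ} {p : MvPolynomial (Fin (d + 1)) A}
    (hp : p ∈ homogeneousSubmodule (Fin (d + 1)) A n) :
    (aeval (ξ a) p).val =
      Localization.mk p ⟨(∑ i, C (a i) * X i) ^ n, pow_mem (Submonoid.mem_powers _) n⟩ := by
  change valₐ a (aeval (ξ a) p) = _
  rw [comp_aeval_apply]
  change aeval (fun i => (ξ a i).val) p = _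
  rw [val_ξ, ((mem_homogeneousSubmodule _ _).1 hp).aeval_smul, aeval_algebraMap_apply,
    aeval_X_left_apply, ← Localization.mk_one_eq_algebraMap, Localization.mk_pow,
    Localization.mk_mul, one_pow, one_mul, mul_one]
  rfl

lemma aeval_ξ_surjective :
    Function.Surjective (aeval (ξ a) : MvPolynomial (Fin (d + 1)) A →ₐ[A] Rloc a) := by
  intro r
  obtain ⟨n, p, hp, rfl⟩ := Away.mk_surjective _ (linear_mem_one a) r
  have hp' : p ∈ homogeneousSubmodule (Fin (d + 1)) A n := by simpa using hp
  exact ⟨p, val_injective _ (by rw [val_aeval_ξ a hp', Away.val_mk])⟩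

lemma aeval_ξ_linearForm : aeval (ξ a) (∑ i, C (a i) * X i) = 1 := by
  apply val_injective
  rw [val_aeval_ξ a (linear_mem_one a), val_one]
  simp only [pow_one]
  exact Localization.mk_self ⟨_, Submonoid.mem_powers _⟩

lemma sum_algebraMap_mul_ξ : ∑ i, algebraMap A (Rloc a) (a i) * ξ a i = 1 := by
  simpa [map_sum, aeval_C, aeval_X] using aeval_ξ_linearForm a

lemma sub_smul_one_mem_Jid (h : ∑ i, a i * s i = 1) (i : Fin (d + 1)) :
    ξ a i - s i • (1 : Rloc a) ∈ Jid a s := by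
  have hs : ∑ j, algebraMap A (Rloc a) (a j) * algebraMap A (Rloc a) (s j) = 1 := by
    simp only [← map_mul, ← map_sum, h, map_one]
  have hy : ξ a i - s i • (1 : Rloc a) =
      ∑ j, algebraMap A (Rloc a) (a j) * (s j • ξ a i - s i • ξ a j) := by
    simp only [smul_eq_algebraMap_mul, mul_one]
    calc ξ a i - algebraMap A (Rloc a) (s i)
        = (∑ j, algebraMap A (Rloc a) (a j) * algebraMap A (Rloc a) (s j)) * ξ a i -
            algebraMap A (Rloc a) (s i) * ∑ j, algebraMap A (Rloc a) (a j) * ξ a j := by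
          rw [hs, sum_algebraMap_mul_ξ]; ring
      _ = _ := by
          rw [Finset.sum_mul, Finset.mul_sum, ← Finset.sum_sub_distrib]
          exact Finset.sum_congr rfl fun j _ => by ring
  rw [hy]
  exact Ideal.sum_mem _ fun j _ => Ideal.mul_mem_left _ _ (Ideal.subset_span ⟨(i, j), rfl⟩)

lemma sum_algebraMap_mul_sub_smul_one (h : ∑ i, a i * s i = 1) :
    ∑ i, algebraMap A (Rloc a) (a i) * (ξ a i - s i • (1 : Rloc a)) = 0 := by
  simp only [smul_eq_algebraMap_mul, mul_one, mul_sub, Finset.sum_sub_distrib,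
    sum_algebraMap_mul_ξ, ← map_mul, ← map_sum, h, map_one, sub_self]

def secondNbhdIdeal : Ideal (MvPolynomial (Fin (d + 1)) A) :=
  Ideal.span ((Set.range fun p : Fin (d + 1) × Fin (d + 1) =>
      (X p.1 * X p.2 : MvPolynomial (Fin (d + 1)) A)) ∪ {∑ i, C (a i) * X i})

lemma span_range_X_sq_le : Ideal.span (Set.range X) ^ 2 ≤ secondNbhdIdeal a := by
  rw [sq, Ideal.span_mul_span', Ideal.span_le]
  rintro _ ⟨_, ⟨i, rfl⟩, _, ⟨j, rfl⟩, rfl⟩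
  exact Ideal.subset_span (Or.inl ⟨(i, j), rfl⟩)

def recenter :
    MvPolynomial (Fin (d + 1)) A →ₐ[A] MvPolynomial (Fin (d + 1)) A ⧸ secondNbhdIdeal a :=
  aeval fun i => Ideal.Quotient.mk _ (X i + C (s i))

lemma recenter_linearForm (h : ∑ i, a i * s i = 1) : recenter a s (∑ i, C (a i) * X i) = 1 := by
  have hF : Ideal.Quotient.mk (secondNbhdIdeal a) (∑ i, C (a i) * X i) = 0 :=
    Ideal.Quotient.eq_zero_iff_mem.2 (Ideal.subset_span (Or.inr rfl))
  have : recenter a s (∑ i, C (a i) * X i) =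
      Ideal.Quotient.mk _ ((∑ i, C (a i) * X i) + C (∑ i, a i * s i)) := by
    simp only [recenter, map_sum, map_mul, aeval_C, aeval_X, map_add, mul_add,
      Finset.sum_add_distrib]
    rfl
  rw [this, map_add, hF, h, C_1, map_one, zero_add]

def recenterLoc (h : ∑ i, a i * s i = 1) :
    Rloc a →ₐ[A] MvPolynomial (Fin (d + 1)) A ⧸ secondNbhdIdeal a :=
  (IsLocalization.liftAlgHom (M := Submonoid.powers (∑ i, C (a i) * X i)) (f := recenter a s) (by
    rintro ⟨_, n, rfl⟩
    simp [recenter_linearForm a s h])).comp (valₐ a)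

lemma recenterLoc_ξ (h : ∑ i, a i * s i = 1) (i : Fin (d + 1)) :
    recenterLoc a s h (ξ a i) = recenter a s (X i) := by
  rw [recenterLoc, AlgHom.comp_apply, IsLocalization.liftAlgHom_apply]
  change IsLocalization.lift _ (ξ a i).val = _
  rw [ξ, val_mk, Localization.mk_eq_mk', IsLocalization.lift_mk'_spec]
  exact (one_mul _).symm.trans (congrArg (· * _) (recenter_linearForm a s h).symm)

lemma map_recenterLoc_Jid_le (h : ∑ i, a i * s i = 1) :
    (Jid a s).map (recenterLoc a s h) ≤
      (Ideal.span (Set.range X)).map (Ideal.Quotient.mk (secondNbhdIdeal a)) := by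
  rw [Jid, Ideal.map_span, Ideal.span_le]
  rintro _ ⟨_, ⟨⟨i, j⟩, rfl⟩, rfl⟩
  have hgen : recenterLoc a s h (s j • ξ a i - s i • ξ a j) =
      Ideal.Quotient.mk _ (C (s j) * X i - C (s i) * X j) := by
    simp only [map_sub, smul_eq_algebraMap_mul, map_mul, AlgHom.commutes, recenterLoc_ξ,
      recenter, aeval_X]
    simp only [← Ideal.Quotient.mk_algebraMap, MvPolynomial.algebraMap_eq, ← map_mul,
      ← map_sub]
    congr 1
    ring
  rw [SetLike.mem_coe, hgen]
  exact Ideal.mem_map_of_mem _ (sub_mem (Ideal.mul_mem_left _ _ (Ideal.subset_span ⟨i, rfl⟩))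
    (Ideal.mul_mem_left _ _ (Ideal.subset_span ⟨j, rfl⟩)))

lemma recenterLoc_eq_zero_of_mem (h : ∑ i, a i * s i = 1) :
    ∀ r ∈ Jid a s ^ 2, recenterLoc a s h r = 0 := by
  intro r hr
  have hle : (Jid a s ^ 2).map (recenterLoc a s h) ≤ ⊥ :=
    calc (Jid a s ^ 2).map (recenterLoc a s h)
        = (Jid a s).map (recenterLoc a s h) ^ 2 := Ideal.map_pow _ _ _
      _ ≤ (Ideal.span (Set.range X)).map (Ideal.Quotient.mk (secondNbhdIdeal a)) ^ 2 :=
          Ideal.pow_right_mono (map_recenterLoc_Jid_le a s h) 2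
      _ = (Ideal.span (Set.range X) ^ 2).map (Ideal.Quotient.mk (secondNbhdIdeal a)) :=
          (Ideal.map_pow _ _ _).symm
      _ ≤ (secondNbhdIdeal a).map (Ideal.Quotient.mk (secondNbhdIdeal a)) :=
          Ideal.map_mono (span_range_X_sq_le a)
      _ = ⊥ := Ideal.map_quotient_self _
  exact Ideal.mem_bot.1 (hle (Ideal.mem_map_of_mem _ hr))

def toSecondNbhd : MvPolynomial (Fin (d + 1)) A →ₐ[A] Rloc a ⧸ Jid a s ^ 2 :=
  aeval fun i => Ideal.Quotient.mk (Jid a s ^ 2) (ξ a i - s i • (1 : Rloc a))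

lemma toSecondNbhd_surjective : Function.Surjective (toSecondNbhd a s) := by
  have hcomp : (toSecondNbhd a s).comp (aeval fun i => X i + C (s i)) =
      (Ideal.Quotient.mkₐ A (Jid a s ^ 2)).comp (aeval (ξ a)) := by
    ext i
    simp [toSecondNbhd, smul_eq_algebraMap_mul]
  refine Function.Surjective.of_comp (g := (aeval fun i => X i + C (s i) :
    MvPolynomial (Fin (d + 1)) A →ₐ[A] MvPolynomial (Fin (d + 1)) A)) ?_
  rw [← AlgHom.coe_comp, hcomp, AlgHom.coe_comp]
  exact (Ideal.Quotient.mkₐ_surjective A _).comp (aeval_ξ_surjective a)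

lemma liftₐ_comp_toSecondNbhd (h : ∑ i, a i * s i = 1) :
    (Ideal.Quotient.liftₐ _ (recenterLoc a s h) (recenterLoc_eq_zero_of_mem a s h)).comp
      (toSecondNbhd a s) = Ideal.Quotient.mkₐ A (secondNbhdIdeal a) := by
  ext i
  rw [AlgHom.comp_apply, toSecondNbhd, aeval_X, ← Ideal.Quotient.mkₐ_eq_mk A,
    ← AlgHom.comp_apply, Ideal.Quotient.liftₐ_comp, Ideal.Quotient.mkₐ_eq_mk, map_sub,
    recenterLoc_ξ, smul_eq_algebraMap_mul, mul_one, AlgHom.commutes, recenter, aeval_X,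
    ← Ideal.Quotient.mk_algebraMap, ← map_sub, MvPolynomial.algebraMap_eq, add_sub_cancel_right]

lemma ker_toSecondNbhd (h : ∑ i, a i * s i = 1) :
    RingHom.ker (toSecondNbhd a s).toRingHom = secondNbhdIdeal a := by
  apply le_antisymm
  · intro p hp
    rw [← Ideal.Quotient.eq_zero_iff_mem, ← Ideal.Quotient.mkₐ_eq_mk A,
      ← liftₐ_comp_toSecondNbhd a s h, AlgHom.comp_apply, show toSecondNbhd a s p = 0 from hp,
      map_zero]
  · rw [secondNbhdIdeal, Ideal.span_le]
    rintro _ (⟨⟨i, j⟩, rfl⟩ | rfl)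
    · change toSecondNbhd a s (X i * X j) = 0
      rw [map_mul, toSecondNbhd, aeval_X, aeval_X, ← map_mul, Ideal.Quotient.eq_zero_iff_mem, sq]
      exact Ideal.mul_mem_mul (sub_smul_one_mem_Jid a s h i) (sub_smul_one_mem_Jid a s h j)
    · change toSecondNbhd a s (∑ i, C (a i) * X i) = 0
      simp only [toSecondNbhd, map_sum, map_mul, aeval_C, aeval_X]
      simp only [← Ideal.Quotient.mk_algebraMap, ← map_mul, ← map_sum,
        sum_algebraMap_mul_sub_smul_one a s h, map_zero]

/-- With `yᵢ := ξᵢ - sᵢ·1` in `Rloc a` and `J` the localized ideal of the section, the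
`A`-algebra homomorphism `Φ : A[t_0, …, t_d] → Rloc a / J²` sending `tᵢ` to the class of `yᵢ`
is surjective, and its kernel is the ideal generated by the products `tᵢ tⱼ` (for all
`0 ≤ i, j ≤ d`) together with the linear form `∑ aᵢ tᵢ`. -/
theorem stmt_5 {A : Type*} [CommRing A] (d : ℕ) (s a : Fin (d + 1) → A)
    (h : ∑ i, a i * s i = 1) :
    Function.Surjective
      (aeval fun i => Ideal.Quotient.mk ((Jid a s) ^ 2) (ξ a i - s i • (1 : Rloc a)) :
        MvPolynomial (Fin (d + 1)) A →ₐ[A] Rloc a ⧸ (Jid a s) ^ 2) ∧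
    RingHom.ker
      (aeval fun i => Ideal.Quotient.mk ((Jid a s) ^ 2) (ξ a i - s i • (1 : Rloc a)) :
        MvPolynomial (Fin (d + 1)) A →ₐ[A] Rloc a ⧸ (Jid a s) ^ 2).toRingHom =
      Ideal.span ((Set.range fun p : Fin (d + 1) × Fin (d + 1) =>
          (X p.1 * X p.2 : MvPolynomial (Fin (d + 1)) A)) ∪
        {∑ i, C (a i) * X i}) :=
  ⟨toSecondNbhd_surjective a s, ker_toSecondNbhd a s h⟩

end
end

section
/- Let A be a commutative ring, d a natural number, s_0,…,s_d, a_0,…,a_d ∈ A with ∑ a_i s_i = 1, and f := ∑ a_i x_i ∈ A[x_0,…,x_d]. Let R be the degree-zero part of the localization of A[x_0,…,x_d] away from f, let ξ_i ∈ R be the class of x_i/f, and let J ⊆ R be the ideal generated by the elements s_j ξ_i − s_i ξ_j for all i, j. Then the A-linear map from the module of homogeneous degree-1 polynomials in A[x_0,…,x_d] to R/J², sending a linear form ℓ = ∑ c_i x_i to the class of ℓ/f = ∑ c_i ξ_i modulo J², is an isomorphism of A-modules. Equivalently, the A-linear map A^{d+1} → R/J² sending the standard basis vector e_i to the class of ξ_i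 is an A-module isomorphism. -/
open MvPolynomial HomogeneousLocalization

attribute [local instance] MvPolynomial.gradedAlgebra

noncomputable section

variable {A : Type*} [CommRing A] {d : ℕ}

variable (a : Fin (d + 1) → A)

variable (s : Fin (d + 1) → A)

/-! Since `∑ aᵢ ξᵢ = 1` and `∑ aᵢ sᵢ = 1`, we have `ξᵢ - sᵢ = ∑ⱼ aⱼ (sⱼ ξᵢ - sᵢ ξⱼ) ∈ J`, so
`(ξᵢ - sᵢ)(ξⱼ - sⱼ) ∈ J²`: modulo `J²` every product `ξᵢ ξⱼ` is an `A`-combination of the `ξ`'s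
and of `1 = ∑ aᵢ ξᵢ`. As the `ξᵢ` generate `R` as an `A`-algebra, their classes span `R/J²`.

For injectivity, send `xᵢ` to `sᵢ + εᵢ` in the square-zero extension `A ⊕ A^{d+1}`, where
`εᵢ = eᵢ - sᵢ a`. This sends `f` to `1`, hence factors through `R`, and sends `ξᵢ` to `(sᵢ, εᵢ)`.
It maps `J` into the square-zero ideal `0 ⊕ A^{d+1}`, so it kills `J²`, and composing with
`(c, v) ↦ v + c a` gives a left inverse sending the class of `ξᵢ` to `eᵢ`. -/

open TrivSqZeroExt

theorem Submodule.span_range_eq_top_of_adjoin_range_eq_top {R Q ι : Type*} [CommSemiring R]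
    [Semiring Q] [Algebra R Q] (y : ι → Q) (hadj : Algebra.adjoin R (Set.range y) = ⊤)
    (hone : 1 ∈ span R (Set.range y)) (hmul : ∀ i j, y i * y j ∈ span R (Set.range y)) :
    span R (Set.range y) = ⊤ := by
  have hsq : span R (Set.range y) * span R (Set.range y) ≤ span R (Set.range y) := by
    rw [span_mul_span, span_le]
    rintro _ ⟨_, ⟨i, rfl⟩, _, ⟨j, rfl⟩, rfl⟩
    exact hmul i j
  have hle := Algebra.adjoin_le (S := (span R (Set.range y)).toSubalgebra hone
    fun _ _ hx hy => hsq (mul_mem_mul hx hy)) subset_span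
  rw [hadj] at hle
  exact eq_top_iff.2 fun x _ => hle Algebra.mem_top

theorem TrivSqZeroExt.sq_le_ker_of_fst_eq_zero {R S M : Type*} [Ring R] [AddCommGroup M]
    [Module R M] [Module Rᵐᵒᵖ M] [SMulCommClass R Rᵐᵒᵖ M] [CommRing S]
    (φ : S →+* TrivSqZeroExt R M) (I : Ideal S) (hI : ∀ x ∈ I, fst (φ x) = 0) : I ^ 2 ≤ RingHom.ker φ := by
  rw [pow_two, Ideal.mul_le]
  intro x hx y hy
  rw [RingHom.mem_ker, map_mul]
  ext <;> simp [hI x hx, hI y hy]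

theorem MvPolynomial.adjoin_range_X_homogeneousSubmodule_zero {σ R : Type*} [CommSemiring R] :
    Algebra.adjoin (homogeneousSubmodule σ R 0) (Set.range (X : σ → MvPolynomial σ R)) = ⊤ := by
  rw [eq_top_iff]
  rintro p -
  induction p using MvPolynomial.induction_on with
  | C c =>
    exact Subalgebra.algebraMap_mem _
      (⟨C c, (mem_homogeneousSubmodule _ _).2 (isHomogeneous_C _ c)⟩ : homogeneousSubmodule σ R 0)
  | add p q hp hq => exact add_mem hp hq
  | mul_X p i hp => exact mul_mem hp (Algebra.subset_adjoin (Set.mem_range_self i))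

abbrev linearForm : MvPolynomial (Fin (d + 1)) A := ∑ i, C (a i) * X i

namespace Rloc

lemma val_ξ (i : Fin (d + 1)) :
    (ξ a i).val = Localization.mk (X i) ⟨linearForm a, Submonoid.mem_powers _⟩ := rfl

lemma val_algebraMap (r : A) :
    (algebraMap A (Rloc a) r).val = Localization.mk (C r) 1 := by
  have hr : (C r : MvPolynomial (Fin (d + 1)) A) ∈ homogeneousSubmodule (Fin (d + 1)) A 0 :=
    (mem_homogeneousSubmodule _ _).2 (isHomogeneous_C _ r)
  show (fromZeroRingHom _ _ (GradedRing.projZeroRingHom' _ (C r))).val = _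
  rw [GradedRing.projZeroRingHom'_apply_coe _
    (⟨C r, hr⟩ : homogeneousSubmodule (Fin (d + 1)) A 0)]
  rfl

-- `r • z` is the scalar action of `HomogeneousLocalization`, not the one of the `A`-algebra.
lemma smul_eq_algebraMap_mul (r : A) (z : Rloc a) : r • z = algebraMap A (Rloc a) r * z := by
  obtain ⟨c, rfl⟩ := mk_surjective z
  apply val_injective
  rw [val_mul, val_algebraMap, val_smul, val_mk, Localization.smul_mk, Localization.mk_mul,
    one_mul, smul_eq_C_mul]

lemma exists_algebraMap_eq_algebraMap (r : homogeneousSubmodule (Fin (d + 1)) A 0) :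
    ∃ c : A, algebraMap _ (Rloc a) r = algebraMap A (Rloc a) c := by
  have hr : (r : MvPolynomial (Fin (d + 1)) A) ∈ (1 : Submodule A (MvPolynomial _ A)) := by
    rw [← homogeneousSubmodule_zero]
    exact r.2
  obtain ⟨c, hc⟩ := Submodule.mem_one.1 hr
  refine ⟨c, val_injective _ ?_⟩
  rw [val_algebraMap]
  show Localization.mk (r : MvPolynomial (Fin (d + 1)) A) 1 = _
  rw [← hc]
  rfl

lemma sum_smul_ξ : ∑ i, a i • ξ a i = 1 := by
  apply val_injective
  simp only [← HomogeneousLocalization.algebraMap_apply, map_sum]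
  simp only [HomogeneousLocalization.algebraMap_apply, val_smul, val_ξ, Localization.smul_mk,
    smul_eq_C_mul, val_one, ← Localization.mk_sum]
  exact Localization.mk_self (⟨_, Submonoid.mem_powers _⟩ : Submonoid.powers _)

lemma awayMk_prod_X_pow (n : ℕ) (e : Fin (d + 1) → ℕ) (he : ∑ i, e i • 1 = n • 1) (hmem) :
    Away.mk (homogeneousSubmodule (Fin (d + 1)) A) (linear_mem_one a) n (∏ i, X i ^ e i) hmem =
      ∏ i, ξ a i ^ e i := by
  apply val_injective
  simp only [← HomogeneousLocalization.algebraMap_apply, map_prod, map_pow]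
  simp only [HomogeneousLocalization.algebraMap_apply, val_ξ, Localization.mk_pow,
    Localization.mk_prod, Away.val_mk]
  simp only [smul_eq_mul, mul_one] at he
  congr 1
  ext
  simp [Finset.prod_pow_eq_pow_sum, he]

lemma adjoin_range_ξ : Algebra.adjoin A (Set.range (ξ a)) = ⊤ := by
  rw [eq_top_iff]
  rintro x -
  have hx : x ∈ Submodule.span _ _ :=
    (Away.span_mk_prod_pow_eq_top (linear_mem_one a) X adjoin_range_X_homogeneousSubmodule_zero
      (fun _ => 1) fun i => (mem_homogeneousSubmodule _ _).2 (isHomogeneous_X _ i)).symm ▸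
      Submodule.mem_top
  induction hx using Submodule.span_induction with
  | mem y hy =>
    obtain ⟨n, e, he, rfl⟩ := hy
    rw [awayMk_prod_X_pow a n e he]
    exact prod_mem fun i _ => pow_mem (Algebra.subset_adjoin (Set.mem_range_self i)) _
  | zero => exact zero_mem _
  | add y z _ _ hy hz => exact add_mem hy hz
  | smul r y _ hy =>
    obtain ⟨c, hc⟩ := exists_algebraMap_eq_algebraMap a r
    rw [Algebra.smul_def, hc]
    exact mul_mem (Subalgebra.algebraMap_mem _ c) hy

lemma sub_algebraMap_mem_Jid (h : ∑ i, a i * s i = 1) (i : Fin (d + 1)) :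
    ξ a i - algebraMap A (Rloc a) (s i) ∈ Jid a s := by
  have hs : ∑ j, algebraMap A (Rloc a) (a j) * algebraMap A (Rloc a) (s j) = 1 := by
    simp only [← map_mul, ← map_sum, h, map_one]
  have hξ := sum_smul_ξ a
  simp only [smul_eq_algebraMap_mul] at hξ
  have key : ξ a i - algebraMap A (Rloc a) (s i) =
      ∑ j, algebraMap A (Rloc a) (a j) * (s j • ξ a i - s i • ξ a j) := calc
    _ = (∑ j, algebraMap A (Rloc a) (a j) * algebraMap A (Rloc a) (s j)) * ξ a i -
          algebraMap A (Rloc a) (s i) * ∑ j, algebraMap A (Rloc a) (a j) * ξ a j := by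
      rw [hs, hξ, one_mul, mul_one]
    _ = _ := by
      rw [Finset.sum_mul, Finset.mul_sum, ← Finset.sum_sub_distrib]
      refine Finset.sum_congr rfl fun j _ => ?_
      rw [smul_eq_algebraMap_mul, smul_eq_algebraMap_mul]
      ring
  rw [key]
  exact sum_mem fun j _ => Ideal.mul_mem_left _ _ (Ideal.subset_span ⟨(i, j), rfl⟩)

lemma mk_smul (I : Ideal (Rloc a)) (r : A) (z : Rloc a) :
    Ideal.Quotient.mk I (r • z) = r • Ideal.Quotient.mk I z := by
  rw [smul_eq_algebraMap_mul, map_mul, Ideal.Quotient.mk_algebraMap, Algebra.smul_def]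

lemma mk_ξ_mul_mk_ξ (h : ∑ i, a i * s i = 1) (i j : Fin (d + 1)) :
    Ideal.Quotient.mk (Jid a s ^ 2) (ξ a i) * Ideal.Quotient.mk (Jid a s ^ 2) (ξ a j) =
      s i • Ideal.Quotient.mk (Jid a s ^ 2) (ξ a j) + s j • Ideal.Quotient.mk (Jid a s ^ 2) (ξ a i)
        - (s i * s j) • 1 := by
  have hsq : Ideal.Quotient.mk (Jid a s ^ 2)
      ((ξ a i - algebraMap A _ (s i)) * (ξ a j - algebraMap A _ (s j))) = 0 :=
    Ideal.Quotient.eq_zero_iff_mem.2 (pow_two (Jid a s) ▸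
      Ideal.mul_mem_mul (sub_algebraMap_mem_Jid a s h i) (sub_algebraMap_mem_Jid a s h j))
  simp only [map_mul, map_sub, Ideal.Quotient.mk_algebraMap] at hsq
  simp only [Algebra.smul_def, map_mul, mul_one]
  linear_combination hsq

lemma one_mem_span_range_mk_ξ (I : Ideal (Rloc a)) :
    1 ∈ Submodule.span A (Set.range fun i => Ideal.Quotient.mk I (ξ a i)) := by
  rw [← map_one (Ideal.Quotient.mk I), ← sum_smul_ξ a, map_sum]
  exact sum_mem fun i _ =>
    mk_smul a I _ _ ▸ Submodule.smul_mem _ _ (Submodule.subset_span ⟨i, rfl⟩)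

lemma span_range_mk_ξ (h : ∑ i, a i * s i = 1) :
    Submodule.span A (Set.range fun i => Ideal.Quotient.mk (Jid a s ^ 2) (ξ a i)) = ⊤ := by
  refine Submodule.span_range_eq_top_of_adjoin_range_eq_top _ ?_ (one_mem_span_range_mk_ξ a _)
    fun i j => ?_
  · rw [← Ideal.Quotient.mkₐ_eq_mk A]
    change Algebra.adjoin A (Set.range (Ideal.Quotient.mkₐ A _ ∘ ξ a)) = ⊤
    rw [Set.range_comp, Algebra.adjoin_image, adjoin_range_ξ, Algebra.map_top,
      AlgHom.range_eq_top]
    exact Ideal.Quotient.mkₐ_surjective A _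
  · rw [mk_ξ_mul_mk_ξ a s h]
    exact sub_mem (add_mem (Submodule.smul_mem _ _ (Submodule.subset_span ⟨j, rfl⟩))
      (Submodule.smul_mem _ _ (Submodule.subset_span ⟨i, rfl⟩)))
      (Submodule.smul_mem _ _ (one_mem_span_range_mk_ξ a _))

def deformedEval : MvPolynomial (Fin (d + 1)) A →ₐ[A] TrivSqZeroExt A (Fin (d + 1) → A) :=
  aeval fun i => inl (s i) + inr (Pi.single i 1 - s i • a)

lemma deformedEval_linearForm (h : ∑ i, a i * s i = 1) : deformedEval a s (linearForm a) = 1 := by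
  simp only [deformedEval, map_sum, map_mul, aeval_C, aeval_X, algebraMap_eq_inl]
  ext
  · simp [fst_sum, h]
  · simp [snd_sum, mul_sub, Finset.sum_sub_distrib, Pi.single_apply, ← mul_assoc,
      ← Finset.sum_mul, h]

lemma isUnit_deformedEval_linearForm (h : ∑ i, a i * s i = 1) :
    IsUnit ((deformedEval a s).toRingHom (linearForm a)) := by
  rw [AlgHom.toRingHom_eq_coe, RingHom.coe_coe, deformedEval_linearForm a s h]
  exact isUnit_one

def deformedEvalAway (h : ∑ i, a i * s i = 1) :
    Localization.Away (linearForm a) →+* TrivSqZeroExt A (Fin (d + 1) → A) :=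
  Localization.awayLift _ _ (isUnit_deformedEval_linearForm a s h)

lemma deformedEvalAway_algebraMap (h : ∑ i, a i * s i = 1) (p : MvPolynomial (Fin (d + 1)) A) :
    deformedEvalAway a s h (algebraMap _ _ p) = deformedEval a s p :=
  IsLocalization.Away.lift_eq _ (isUnit_deformedEval_linearForm a s h) p

def toTrivSqZeroExt (h : ∑ i, a i * s i = 1) : Rloc a →ₐ[A] TrivSqZeroExt A (Fin (d + 1) → A) :=
  { (deformedEvalAway a s h).comp (algebraMap (Rloc a) _) with
    commutes' r := by
      show deformedEvalAway a s h (algebraMap A (Rloc a) r).val = _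
      rw [val_algebraMap, Localization.mk_one_eq_algebraMap, deformedEvalAway_algebraMap]
      exact (deformedEval a s).commutes r }

lemma toTrivSqZeroExt_ξ (h : ∑ i, a i * s i = 1) (i : Fin (d + 1)) :
    toTrivSqZeroExt a s h (ξ a i) = inl (s i) + inr (Pi.single i 1 - s i • a) := by
  have hξ : (ξ a i).val * algebraMap _ (Localization.Away (linearForm a)) (linearForm a) =
      algebraMap (MvPolynomial (Fin (d + 1)) A) (Localization.Away (linearForm a)) (X i) := by
    rw [val_ξ, Localization.mk_eq_mk']
    exact IsLocalization.mk'_spec _ _ _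
  have := congrArg (deformedEvalAway a s h) hξ
  rw [map_mul, deformedEvalAway_algebraMap, deformedEvalAway_algebraMap,
    deformedEval_linearForm a s h, mul_one] at this
  exact this.trans (aeval_X _ i)

lemma fst_toTrivSqZeroExt_of_mem_Jid (h : ∑ i, a i * s i = 1) {x : Rloc a} (hx : x ∈ Jid a s) :
    fst (toTrivSqZeroExt a s h x) = 0 := by
  suffices Jid a s ≤ RingHom.ker ((fstHom A A (Fin (d + 1) → A)).comp (toTrivSqZeroExt a s h))
    from this hx
  refine Ideal.span_le.2 ?_
  rintro _ ⟨⟨i, j⟩, rfl⟩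
  simp [smul_eq_algebraMap_mul, toTrivSqZeroExt_ξ, algebraMap_eq_inl, mul_comm]

def quotSqToPi (h : ∑ i, a i * s i = 1) : (Rloc a ⧸ Jid a s ^ 2) →ₗ[A] (Fin (d + 1) → A) :=
  (sndHom A (Fin (d + 1) → A) + (fstHom A A (Fin (d + 1) → A)).toLinearMap.smulRight a) ∘ₗ
    (Ideal.Quotient.liftₐ _ (toTrivSqZeroExt a s h) (sq_le_ker_of_fst_eq_zero _ _
      fun _ hx => fst_toTrivSqZeroExt_of_mem_Jid a s h hx)).toLinearMap

lemma quotSqToPi_mk (h : ∑ i, a i * s i = 1) (z : Rloc a) :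
    quotSqToPi a s h (Ideal.Quotient.mk _ z) =
      snd (toTrivSqZeroExt a s h z) + fst (toTrivSqZeroExt a s h z) • a :=
  rfl

lemma quotSqToPi_comp_linearCombination (h : ∑ i, a i * s i = 1) :
    quotSqToPi a s h ∘ₗ
      Fintype.linearCombination A (fun i => Ideal.Quotient.mk (Jid a s ^ 2) (ξ a i)) =
      LinearMap.id := by
  refine LinearMap.pi_ext' fun i => LinearMap.ext_ring ?_
  simp [quotSqToPi_mk, toTrivSqZeroExt_ξ]

end Rloc

/-- The `A`-linear map `A^{d+1} → Rloc a / J²` sending the standard basis vector `eᵢ` to the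
class of `ξᵢ` (equivalently, sending a linear form `ℓ = ∑ cᵢ xᵢ` of `A[x_0, …, x_d]` to the
class of `ℓ/f = ∑ cᵢ ξᵢ` modulo `J²`) is an isomorphism of `A`-modules. -/
theorem stmt_7 {A : Type*} [CommRing A] (d : ℕ) (s a : Fin (d + 1) → A)
    (h : ∑ i, a i * s i = 1) :
    Function.Bijective
      (Fintype.linearCombination A
        (fun i => Ideal.Quotient.mk ((Jid a s) ^ 2) (ξ a i)) :
        (Fin (d + 1) → A) →ₗ[A] Rloc a ⧸ (Jid a s) ^ 2) := by
  refine ⟨Function.LeftInverse.injective (g := Rloc.quotSqToPi a s h)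
    (LinearMap.congr_fun (Rloc.quotSqToPi_comp_linearCombination a s h)), ?_⟩
  rw [← LinearMap.range_eq_top, Fintype.range_linearCombination]
  exact Rloc.span_range_mk_ξ a s h

end
end
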